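/- arXiv:1704.06074 — 9 statements merged into one kernel-verified Lean document; each statement's English description precedes it below -/
import Mathlib

section
/- For fixed d > 0 and κ ≥ 1, the function h(u) = |min(κ·u, max(d, max(1, u))) - d| is convex on [1/κ, ∞). -/
/-! On `[1/κ, ∞)` we have `max 1 u ≤ κ u`, and under this inequality the absolute value unfolds
into `max (d - κ u) (max 1 u - d) ⊔ 0`, a maximum of convex functions of `u`. -/

lemma abs_min_max_sub_eq {α : Type*} [AddCommGroup α] [LinearOrder α] [IsOrderedAddMonoid α]
    {x m d : α} (hmx : m ≤ x) :
    |min x (max d m) - d| = max (max (d - x) (m - d)) 0 := by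
  rcases le_total x d with hxd | hdx
  · have hmd : m - d ≤ d - x :=
      calc m - d ≤ x - d := sub_le_sub_right hmx d
        _ ≤ 0 := sub_nonpos.2 hxd
        _ ≤ d - x := sub_nonneg.2 hxd
    rw [min_eq_left (le_max_of_le_left hxd), abs_of_nonpos (sub_nonpos.2 hxd), neg_sub,
      max_eq_left hmd, max_eq_left (sub_nonneg.2 hxd)]
  · rw [min_eq_right (max_le hdx hmx), abs_of_nonneg (sub_nonneg.2 (le_max_left d m)),
      ← max_sub_sub_right, sub_self, max_comm (d - x), max_assoc,
      max_eq_right (sub_nonpos.2 hdx), max_comm]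

lemma max_one_le_mul_of_inv_le {κ u : ℝ} (hκ : 1 ≤ κ) (hu : 1 / κ ≤ u) : max 1 u ≤ κ * u := by
  have hκ0 : 0 < κ := one_pos.trans_le hκ
  have hu0 : 0 ≤ u := (one_div_pos.2 hκ0).le.trans hu
  exact max_le ((div_le_iff₀' hκ0).1 hu) (le_mul_of_one_le_left hu0 hκ)

lemma convexOn_max_max_sub_mul_max_one_sub (d κ : ℝ) :
    ConvexOn ℝ Set.univ (fun u : ℝ => max (max (d - κ * u) (max 1 u - d)) 0) := by
  have hlin : ConvexOn ℝ Set.univ (fun u : ℝ => d - κ * u) :=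
    (convexOn_const d convex_univ).sub ((LinearMap.mul ℝ ℝ κ).concaveOn convex_univ)
  have hmax : ConvexOn ℝ Set.univ (fun u : ℝ => max 1 u - d) :=
    ((convexOn_const 1 convex_univ).sup (convexOn_id convex_univ)).sub
      (concaveOn_const d convex_univ)
  exact (hlin.sup hmax).sup (convexOn_const 0 convex_univ)

theorem projection_error_convex_general (d κ : ℝ) (hκ : 1 ≤ κ) :
    ConvexOn ℝ (Set.Ici (1 / κ))
      (fun u : ℝ => |min (κ * u) (max d (max 1 u)) - d|) :=
  ((convexOn_max_max_sub_mul_max_one_sub d κ).subset (Set.subset_univ _) (convex_Ici _)).congr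
    fun _u hu => (abs_min_max_sub_eq (max_one_le_mul_of_inv_le hκ hu)).symm

/-- The single-eigenvalue projection error `h(u) = |min (κu) (max d (max 1 u)) - d|`
is convex on `[1/κ, ∞)`. -/
theorem projection_error_convex (d κ : ℝ) (hd : 0 < d) (hκ : 1 ≤ κ) :
    ConvexOn ℝ (Set.Ici (1 / κ))
      (fun u : ℝ => |min (κ * u) (max d (max 1 u)) - d|) :=
  projection_error_convex_general d κ hκ
end

section
/- Let d₁,…,d_N > 0, κ ≥ 1 and h_i(u) = |min(κu, max(d_i, max(1, u))) - d_i|. Then G₁(u) = Σ_{i=1}^N h_i(u)² is convex and continuously differentiable on the interval [1, d₁] (whenever d₁ ≥ 1). -/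
open Set Filter Topology

/-!
For `u ≥ 1` and `κ ≥ 1` the `i`-th term of `G₁` equals `(u - dᵢ)₊² + (dᵢ - κu)₊²`, an expression
defined on all of `ℝ`. The squared positive part `x ↦ x₊²` is convex and `C¹` (its derivative
`2x₊` is continuous), and both properties survive precomposition with affine maps and finite sums.
-/

theorem ConvexOn.sum {𝕜 E β ι : Type*} [Semiring 𝕜] [PartialOrder 𝕜] [AddCommMonoid E]
    [AddCommMonoid β] [PartialOrder β] [IsOrderedAddMonoid β] [SMul 𝕜 E] [Module 𝕜 β]
    {s : Set E} (hs : Convex 𝕜 s) {f : ι → E → β} (t : Finset ι)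
    (hf : ∀ i ∈ t, ConvexOn 𝕜 s (f i)) : ConvexOn 𝕜 s fun x => ∑ i ∈ t, f i x := by
  classical
  induction t using Finset.induction_on with
  | empty => simpa using convexOn_const (0 : β) hs
  | insert a t ha ih =>
    simp only [Finset.sum_insert ha]
    exact (hf a (Finset.mem_insert_self a t)).add
      (ih fun i hi => hf i (Finset.mem_insert_of_mem hi))

theorem ConvexOn.comp_mul_add {f : ℝ → ℝ} (hf : ConvexOn ℝ univ f) (a b : ℝ) :
    ConvexOn ℝ univ fun x => f (a * x + b) := by
  simpa [Function.comp_def, add_comm] using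
    (hf.translate_left b).comp_linearMap (LinearMap.mulLeft ℝ a)

theorem convexOn_max_zero_sq : ConvexOn ℝ univ fun x : ℝ => max x 0 ^ 2 :=
  ((convexOn_id convex_univ).sup (convexOn_const 0 convex_univ)).pow
    (fun x _ => le_max_right x 0) 2

theorem hasDerivAt_max_zero_sq (x : ℝ) :
    HasDerivAt (fun y : ℝ => max y 0 ^ 2) (2 * max x 0) x := by
  -- Away from `0` the function is locally `0` or `y ^ 2`; at `0` the continuous derivative extends.
  refine hasDerivAt_of_hasDerivAt_of_ne' (g := fun y => 2 * max y 0) (x := 0)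
    (fun y hy => ?_) (by fun_prop) (by fun_prop) x
  rcases hy.lt_or_gt with hy | hy
  · have hzero : (fun z : ℝ => max z 0 ^ 2) =ᶠ[𝓝 y] fun _ => 0 := by
      filter_upwards [Iio_mem_nhds hy] with z hz
      simp [max_eq_right (le_of_lt (mem_Iio.mp hz))]
    rw [max_eq_right hy.le, mul_zero]
    exact (hasDerivAt_const y 0).congr_of_eventuallyEq hzero
  · have hsq : (fun z : ℝ => max z 0 ^ 2) =ᶠ[𝓝 y] fun z => z ^ 2 := by
      filter_upwards [Ioi_mem_nhds hy] with z hz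
      rw [max_eq_left (le_of_lt (mem_Ioi.mp hz))]
    rw [max_eq_left hy.le]
    simpa using (hasDerivAt_pow 2 y).congr_of_eventuallyEq hsq

theorem contDiff_max_zero_sq : ContDiff ℝ 1 fun x : ℝ => max x 0 ^ 2 := by
  rw [contDiff_one_iff_deriv]
  refine ⟨fun x => (hasDerivAt_max_zero_sq x).differentiableAt, ?_⟩
  rw [funext fun x => (hasDerivAt_max_zero_sq x).deriv]
  fun_prop

theorem sq_abs_min_mul_max_sub {d κ u : ℝ} (hκ : 1 ≤ κ) (hu : 0 ≤ u) :
    |min (κ * u) (max d u) - d| ^ 2 = max (u - d) 0 ^ 2 + max (d - κ * u) 0 ^ 2 := by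
  have hκu : u ≤ κ * u := le_mul_of_one_le_left hu hκ
  rcases le_total d u with hdu | hud
  · rw [max_eq_right hdu, min_eq_right hκu, abs_of_nonneg (sub_nonneg.2 hdu),
      max_eq_left (sub_nonneg.2 hdu), max_eq_right (by linarith)]
    ring
  rcases le_total (κ * u) d with hκud | hdκu
  · rw [max_eq_left hud, min_eq_left hκud, abs_of_nonpos (sub_nonpos.2 hκud),
      max_eq_right (sub_nonpos.2 hud), max_eq_left (sub_nonneg.2 hκud)]
    ring
  · rw [max_eq_left hud, min_eq_right hdκu, sub_self, max_eq_right (sub_nonpos.2 hud),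
      max_eq_right (sub_nonpos.2 hdκu)]
    ring

theorem G1_convex_contDiff_general (N : ℕ) (d : ℕ → ℝ) (κ : ℝ)
    (hκ : 1 ≤ κ)
    (G : ℝ → ℝ)
    (hG : ∀ u, G u = ∑ i ∈ Finset.range N,
      (|min (κ * u) (max (d i) (max 1 u)) - d i|) ^ 2) :
    ConvexOn ℝ (Set.Icc 1 (d 0)) G ∧ ContDiffOn ℝ 1 G (Set.Icc 1 (d 0)) := by
  set F : ℝ → ℝ := fun u =>
    ∑ i ∈ Finset.range N, (max (u - d i) 0 ^ 2 + max (d i - κ * u) 0 ^ 2)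
  have hFG : EqOn F G (Icc 1 (d 0)) := fun u hu => by
    rw [hG, max_eq_right hu.1]
    exact Finset.sum_congr rfl fun i _ =>
      (sq_abs_min_mul_max_sub hκ (zero_le_one.trans hu.1)).symm
  have hF_convex : ConvexOn ℝ univ F := by
    refine ConvexOn.sum convex_univ _ fun i _ => ?_
    have hpos := convexOn_max_zero_sq.comp_mul_add 1 (-d i)
    have hneg := convexOn_max_zero_sq.comp_mul_add (-κ) (d i)
    simp only [one_mul, ← sub_eq_add_neg, neg_mul, neg_add_eq_sub] at hpos hneg
    exact hpos.add hneg
  have hF_contDiff : ContDiff ℝ 1 F :=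
    ContDiff.sum fun i _ =>
      (contDiff_max_zero_sq.comp (by fun_prop)).add (contDiff_max_zero_sq.comp (by fun_prop))
  exact ⟨(hF_convex.subset (subset_univ _) (convex_Icc _ _)).congr hFG,
    hF_contDiff.contDiffOn.congr fun u hu => (hFG hu).symm⟩

/-- The Frobenius-norm one-dimensional objective `G₁(u) = Σᵢ hᵢ(u)²` is convex and
continuously differentiable on `[1, d₁]`. -/
theorem G1_convex_contDiff (N : ℕ) (hN : 0 < N) (d : ℕ → ℝ) (κ : ℝ)
    (hdpos : ∀ i < N, 0 < d i)
    (hdec : ∀ i j, i ≤ j → j < N → d j ≤ d i)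
    (hκ : 1 ≤ κ) (hd1 : 1 ≤ d 0)
    (G : ℝ → ℝ)
    (hG : ∀ u, G u = ∑ i ∈ Finset.range N,
      (|min (κ * u) (max (d i) (max 1 u)) - d i|) ^ 2) :
    ConvexOn ℝ (Set.Icc 1 (d 0)) G ∧ ContDiffOn ℝ 1 G (Set.Icc 1 (d 0)) :=
  G1_convex_contDiff_general N d κ hκ G hG
end

section
/- Let d₁,…,d_N ∈ (0, 1], κ ≥ 1, and h_i(u) as above. Then G₁(u) = Σ h_i(u)² is constant on [1/κ, 1) and strictly increasing on [1, ∞) (provided not all d_i equal u). Consequently u* = 1/κ minimizes G₁ over [1/κ, ∞). -/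
/-! Since every `dᵢ ≤ 1` and `κu ≥ 1`, each residual `hᵢ(u)` equals `max 1 u - dᵢ` on `[1/κ, ∞)`.
Hence `G₁(u) = F(max 1 u)` with `F(v) = Σ (v - dᵢ)²`, which is strictly increasing for `v ≥ 1`;
so `G₁` is constant (equal to `F 1`) on `[1/κ, 1]` and strictly increasing afterwards. -/

open Finset Set

lemma abs_min_mul_max_sub_eq_max_one_sub {κ d u : ℝ} (hd : d ≤ 1) (hκ : 1 ≤ κ)
    (hu : 1 ≤ κ * u) : |min (κ * u) (max d (max 1 u)) - d| = max 1 u - d := by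
  have hu0 : 0 ≤ u := by nlinarith
  have hκu : max 1 u ≤ κ * u := max_le hu (by nlinarith)
  rw [max_eq_right (hd.trans (le_max_left 1 u)), min_eq_right hκu,
    abs_of_nonneg (by linarith [le_max_left 1 u])]

lemma strictMonoOn_sum_sq_sub {ι : Type*} {s : Finset ι} (hs : s.Nonempty) {d : ι → ℝ} {a : ℝ}
    (hd : ∀ i ∈ s, d i ≤ a) : StrictMonoOn (fun v => ∑ i ∈ s, (v - d i) ^ 2) (Ici a) := by
  intro v hv w hw hvw
  refine sum_lt_sum_of_nonempty hs fun i hi => ?_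
  have hdv : 0 ≤ v - d i := by linarith [hd i hi, Set.mem_Ici.mp hv]
  exact pow_lt_pow_left₀ (by linarith) hdv two_ne_zero

/-- Case `d₁ ≤ 1` of the Frobenius-norm reduced problem: `G₁` is constant on
`[1/κ, 1)`, strictly increasing on `[1, ∞)`, and minimized at `u* = 1/κ`. -/
theorem G1_min_all_d_le_one (N : ℕ) (hN : 0 < N) (d : ℕ → ℝ) (κ : ℝ)
    (hd : ∀ i < N, 0 < d i ∧ d i ≤ 1) (hκ : 1 ≤ κ)
    (G : ℝ → ℝ)
    (hG : ∀ u, G u = ∑ i ∈ Finset.range N,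
      (|min (κ * u) (max (d i) (max 1 u)) - d i|) ^ 2) :
    (∀ u ∈ Set.Ico (1 / κ) 1, G u = G (1 / κ)) ∧
    StrictMonoOn G (Set.Ici 1) ∧
    (∀ u ∈ Set.Ici (1 / κ), G (1 / κ) ≤ G u) := by
  have hκ0 : 0 < κ := one_pos.trans_le hκ
  set F : ℝ → ℝ := fun v => ∑ i ∈ range N, (v - d i) ^ 2
  have hd1 : ∀ i ∈ range N, d i ≤ 1 := fun i hi => (hd i (mem_range.mp hi)).2
  have hGF : ∀ u ∈ Ici (1 / κ), G u = F (max 1 u) := fun u hu => by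
    have hκu : 1 ≤ κ * u := by rwa [Set.mem_Ici, div_le_iff₀' hκ0] at hu
    exact (hG u).trans <| sum_congr rfl fun i hi => by
      rw [abs_min_mul_max_sub_eq_max_one_sub (hd1 i hi) hκ hκu]
  have hκinv : 1 / κ ≤ 1 := (div_le_one hκ0).mpr hκ
  have hG_inv : G (1 / κ) = F 1 := by rw [hGF _ self_mem_Ici, max_eq_left hκinv]
  have hF : StrictMonoOn F (Ici 1) := strictMonoOn_sum_sq_sub ⟨0, mem_range.mpr hN⟩ hd1
  have hG_ge_one : ∀ u ∈ Ici (1 : ℝ), G u = F u := fun u hu => by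
    rw [hGF u (hκinv.trans hu), max_eq_right hu]
  refine ⟨fun u hu => ?_, fun u hu v hv huv => ?_, fun u hu => ?_⟩
  · rw [hGF u hu.1, max_eq_left hu.2.le, hG_inv]
  · rw [hG_ge_one u hu, hG_ge_one v hv]
    exact hF hu hv huv
  · rw [hG_inv, hGF u hu]
    exact hF.monotoneOn self_mem_Ici (le_max_left 1 u) (le_max_left 1 u)
end

section
/- Let 1 < d₁ ≤ κ with d₁ ≥ d₂ ≥ … ≥ d_N > 0, and h_i(u) = |min(κu, max(d_i, max(1,u))) - d_i|, G₁(u) = Σ h_i(u)². Then u* = d₁/κ is a minimizer of G₁ over [1/κ, ∞). -/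
/-! Minimization is termwise. Every admissible `u ≥ 1/κ` gives shrinkage eigenvalues
`λ_i(u) ≥ 1`, so `|λ_i(u) - d_i| ≥ max d_i 1 - d_i`; at `u* = d₁/κ` we have `κ u* = d₁`
and `max 1 u* = 1`, hence `λ_i(u*) = max d_i 1` attains this lower bound for every `i`
at once. -/

lemma abs_max_sub_le_abs_sub {a l d : ℝ} (hal : a ≤ l) : |max d a - d| ≤ |l - d| := by
  rw [abs_of_nonneg (sub_nonneg.2 (le_max_left d a))]
  rcases le_total d a with hda | had
  · rw [max_eq_right hda]
    exact (sub_le_sub_right hal d).trans (le_abs_self _)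
  · rw [max_eq_left had, sub_self]
    exact abs_nonneg _

/-- The shrinkage eigenvalue `λ(u)` attached to a sample eigenvalue `d`. -/
def shrinkEigenvalue (κ d u : ℝ) : ℝ := min (κ * u) (max d (max 1 u))

lemma one_le_shrinkEigenvalue {κ u : ℝ} (d : ℝ) (hκ : 0 < κ) (hu : 1 / κ ≤ u) :
    1 ≤ shrinkEigenvalue κ d u :=
  le_min ((div_le_iff₀' hκ).1 hu) ((le_max_left 1 u).trans (le_max_right d _))

lemma shrinkEigenvalue_div {κ d d₀ : ℝ} (hκ : 0 < κ) (hd : d ≤ d₀) (hd₀ : 1 ≤ d₀)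
    (hd₀κ : d₀ ≤ κ) : shrinkEigenvalue κ d (d₀ / κ) = max d 1 := by
  have hmax : max 1 (d₀ / κ) = 1 := max_eq_left ((div_le_one hκ).2 hd₀κ)
  rw [shrinkEigenvalue, mul_div_cancel₀ d₀ hκ.ne', hmax, min_eq_right (max_le hd hd₀)]

theorem G1_min_d1_le_kappa_general (N : ℕ) (d : ℕ → ℝ) (κ : ℝ)
    (hdec : ∀ i j, i ≤ j → j < N → d j ≤ d i)
    (hd1 : 1 < d 0) (hd1κ : d 0 ≤ κ)
    (G : ℝ → ℝ)
    (hG : ∀ u, G u = ∑ i ∈ Finset.range N,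
      (|min (κ * u) (max (d i) (max 1 u)) - d i|) ^ 2) :
    ∀ u ∈ Set.Ici (1 / κ), G (d 0 / κ) ≤ G u := by
  intro u hu
  have hκ : 0 < κ := by linarith
  rw [hG, hG]
  refine Finset.sum_le_sum fun i hi => ?_
  have hdi : d i ≤ d 0 := hdec 0 i i.zero_le (Finset.mem_range.1 hi)
  have hopt :
      |shrinkEigenvalue κ (d i) (d 0 / κ) - d i| ≤ |shrinkEigenvalue κ (d i) u - d i| := by
    rw [shrinkEigenvalue_div hκ hdi hd1.le hd1κ]
    exact abs_max_sub_le_abs_sub (one_le_shrinkEigenvalue (d i) hκ hu)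
  exact pow_le_pow_left₀ (abs_nonneg _) hopt 2

/-- Case `1 < d₁ ≤ κ` of the Frobenius-norm reduced problem: `u* = d₁/κ` is a
minimizer of `G₁` over `[1/κ, ∞)`. -/
theorem G1_min_d1_le_kappa (N : ℕ) (hN : 0 < N) (d : ℕ → ℝ) (κ : ℝ)
    (hdpos : ∀ i < N, 0 < d i)
    (hdec : ∀ i j, i ≤ j → j < N → d j ≤ d i)
    (hd1 : 1 < d 0) (hd1κ : d 0 ≤ κ)
    (G : ℝ → ℝ)
    (hG : ∀ u, G u = ∑ i ∈ Finset.range N,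
      (|min (κ * u) (max (d i) (max 1 u)) - d i|) ^ 2) :
    ∀ u ∈ Set.Ici (1 / κ), G (d 0 / κ) ≤ G u :=
  G1_min_d1_le_kappa_general N d κ hdec hd1 hd1κ G hG
end

section
/- Let d₁ > κ ≥ 1 with d₁ ≥ … ≥ d_N > 0 and G₁(u) = Σ_{i=1}^N (|min(κu, max(d_i, max(1,u))) - d_i|)². Then G₁ is strictly decreasing on [1/κ, 1) and strictly increasing on (d₁, ∞); hence every minimizer of G₁ over [1/κ, ∞) lies in [1, d₁]. -/
/-!
On `[1/κ, 1)` we have `max 1 u = 1` and `κ u ≥ 1`, so every summand is non-increasing, while the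
summand of `d₀ > κ ≥ κ u` is `(d₀ - κ u)²` and strictly decreasing. On `(d₀, ∞)` every summand is
`(u - dᵢ)²`, strictly increasing since `dᵢ ≤ d₀ < u`. A minimizer over `[1/κ, ∞)` therefore lies
neither left of `1` nor right of `d₀`.
-/

open Set

def g1Term (κ d u : ℝ) : ℝ := |min (κ * u) (max d (max 1 u)) - d| ^ 2

lemma g1Term_antitoneOn {κ : ℝ} (hκ : 0 < κ) (d : ℝ) :
    AntitoneOn (g1Term κ d) (Icc (1 / κ) 1) := by
  intro u ⟨hu, hu1⟩ v ⟨_, hv1⟩ huv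
  have hκu : 1 ≤ κ * u := by rwa [div_le_iff₀' hκ] at hu
  unfold g1Term
  rw [max_eq_left hu1, max_eq_left hv1]
  refine pow_le_pow_left₀ (abs_nonneg _) ?_ 2
  rcases le_or_gt d 1 with hd | hd
  · rw [max_eq_right hd, min_eq_right hκu, min_eq_right (hκu.trans (by gcongr))]
  · rw [max_eq_left hd.le, abs_of_nonpos (by simp), abs_of_nonpos (by simp)]
    have hmin : min (κ * u) d ≤ min (κ * v) d := min_le_min_right d (by gcongr)
    linarith

lemma g1Term_strictAntiOn {κ d : ℝ} (hκ : 0 < κ) (hκd : κ < d) :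
    StrictAntiOn (g1Term κ d) (Iic 1) := by
  have hsq : ∀ u ≤ 1, g1Term κ d u = (d - κ * u) ^ 2 := fun u hu => by
    have hκu : κ * u < d := by nlinarith
    rw [g1Term, max_eq_left hu, min_eq_left (hκu.le.trans (le_max_left d 1)),
      abs_sub_comm, sq_abs]
  intro u hu v hv huv
  rw [hsq u hu, hsq v hv]
  have hκv : κ * v < d := by nlinarith [mem_Iic.1 hv]
  gcongr

lemma g1Term_strictMonoOn {κ : ℝ} (hκ : 1 ≤ κ) (d : ℝ) :
    StrictMonoOn (g1Term κ d) (Ioi (max d 1)) := by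
  have hsq : ∀ u, max d 1 < u → g1Term κ d u = (u - d) ^ 2 := fun u hu => by
    rw [max_lt_iff] at hu
    rw [g1Term, max_eq_right hu.2.le, max_eq_right hu.1.le,
      min_eq_right (le_mul_of_one_le_left (by linarith) hκ), sq_abs]
  intro u hu v hv huv
  rw [hsq u hu, hsq v hv]
  have hdu : d < u := (le_max_left d 1).trans_lt hu
  gcongr

namespace Finset

variable {ι : Type*} {s : Finset ι} {f : ι → ℝ → ℝ} {t : Set ℝ}

lemma strictAntiOn_sum {i₀ : ι} (hi₀ : i₀ ∈ s) (hf₀ : StrictAntiOn (f i₀) t)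
    (hf : ∀ i ∈ s, AntitoneOn (f i) t) : StrictAntiOn (fun u => ∑ i ∈ s, f i u) t :=
  fun _ hu _ hv huv =>
    sum_lt_sum (fun i hi => hf i hi hu hv huv.le) ⟨i₀, hi₀, hf₀ hu hv huv⟩

lemma strictMonoOn_sum (hs : s.Nonempty) (hf : ∀ i ∈ s, StrictMonoOn (f i) t) :
    StrictMonoOn (fun u => ∑ i ∈ s, f i u) t :=
  fun _ hu _ hv huv => sum_lt_sum_of_nonempty hs fun i hi => hf i hi hu hv huv

end Finset

lemma IsMinOn.mem_Icc_of_strictAntiOn_of_strictMonoOn {α β : Type*} [LinearOrder α]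
    [DenselyOrdered α] [Preorder β] {f : α → β} {a b c u : α} (hac : a ≤ c)
    (hanti : StrictAntiOn f (Ico a b)) (hmono : StrictMonoOn f (Ioi c))
    (hu : u ∈ Ici a) (hmin : IsMinOn f (Ici a) u) : u ∈ Icc b c := by
  rw [isMinOn_iff] at hmin
  constructor
  · by_contra! hub
    obtain ⟨v, huv, hvb⟩ := exists_between hub
    have hv : v ∈ Ico a b := ⟨le_trans hu huv.le, hvb⟩
    exact (hanti ⟨hu, hub⟩ hv huv).not_ge (hmin v hv.1)
  · by_contra! hcu
    obtain ⟨v, hcv, hvu⟩ := exists_between hcu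
    exact (hmono hcv hcu hvu).not_ge (hmin v (hac.trans hcv.le))

theorem G1_minimizer_localization_general (N : ℕ) (hN : 0 < N) (d : ℕ → ℝ) (κ : ℝ)
    (hdec : ∀ i j, i ≤ j → j < N → d j ≤ d i)
    (hκ : 1 ≤ κ) (hd1 : κ < d 0)
    (G : ℝ → ℝ)
    (hG : ∀ u, G u = ∑ i ∈ Finset.range N,
      (|min (κ * u) (max (d i) (max 1 u)) - d i|) ^ 2) :
    StrictAntiOn G (Set.Ico (1 / κ) 1) ∧
    StrictMonoOn G (Set.Ioi (d 0)) ∧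
    (∀ u ∈ Set.Ici (1 / κ), (∀ v ∈ Set.Ici (1 / κ), G u ≤ G v) →
      u ∈ Set.Icc 1 (d 0)) := by
  have hκ0 : 0 < κ := one_pos.trans_le hκ
  obtain rfl : G = fun u => ∑ i ∈ Finset.range N, g1Term κ (d i) u := funext hG
  have hanti : StrictAntiOn _ (Ico (1 / κ) 1) :=
    Finset.strictAntiOn_sum (Finset.mem_range.2 hN)
      ((g1Term_strictAntiOn hκ0 hd1).mono fun _ hu => hu.2.le)
      fun i _ => (g1Term_antitoneOn hκ0 (d i)).mono Ico_subset_Icc_self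
  have hmono : StrictMonoOn _ (Ioi (d 0)) :=
    Finset.strictMonoOn_sum (Finset.nonempty_range_iff.2 hN.ne') fun i hi =>
      (g1Term_strictMonoOn hκ (d i)).mono <| Ioi_subset_Ioi <|
        max_le (hdec 0 i i.zero_le (Finset.mem_range.1 hi)) (hκ.trans hd1.le)
  have hκd : 1 / κ ≤ d 0 := ((div_le_one hκ0).2 hκ).trans (hκ.trans hd1.le)
  exact ⟨hanti, hmono, fun u hu hmin =>
    IsMinOn.mem_Icc_of_strictAntiOn_of_strictMonoOn hκd hanti hmono hu (isMinOn_iff.2 hmin)⟩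

/-- Case `d₁ > κ`: `G₁` is strictly decreasing on `[1/κ, 1)`, strictly increasing
on `(d₁, ∞)`, and every minimizer over `[1/κ, ∞)` lies in `[1, d₁]`. -/
theorem G1_minimizer_localization (N : ℕ) (hN : 0 < N) (d : ℕ → ℝ) (κ : ℝ)
    (hdpos : ∀ i < N, 0 < d i)
    (hdec : ∀ i j, i ≤ j → j < N → d j ≤ d i)
    (hκ : 1 ≤ κ) (hd1 : κ < d 0)
    (G : ℝ → ℝ)
    (hG : ∀ u, G u = ∑ i ∈ Finset.range N,
      (|min (κ * u) (max (d i) (max 1 u)) - d i|) ^ 2) :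
    StrictAntiOn G (Set.Ico (1 / κ) 1) ∧
    StrictMonoOn G (Set.Ioi (d 0)) ∧
    (∀ u ∈ Set.Ici (1 / κ), (∀ v ∈ Set.Ici (1 / κ), G u ≤ G v) →
      u ∈ Set.Icc 1 (d 0)) :=
  G1_minimizer_localization_general N hN d κ hdec hκ hd1 G hG
end

section
/- Let 1 < d₁ ≤ κ and d_N > 1 with d₁ ≥ … ≥ d_N, and h_i(u) as above. Then G₂(u) = max_i h_i(u) attains the value 0 at u* = d₁/κ, i.e., G₂(d₁/κ) = 0 and d₁/κ minimizes G₂ over [1/κ, ∞). -/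
/-! At `u* = d₁/κ ≤ 1` the clipping `min (κ u) (max dᵢ (max 1 u))` becomes `min d₁ (max dᵢ 1)`,
which returns every `dᵢ ∈ [1, d₁]` unchanged, so every error `hᵢ(u*)` vanishes. Since `G₂` is a
maximum of absolute values it is nonnegative, hence `u*` is a minimizer. -/

theorem min_max_eq_self_of_le {α : Type*} [LinearOrder α] {lo x hi : α}
    (hlo : lo ≤ x) (hhi : x ≤ hi) : min hi (max x lo) = x := by
  rw [max_eq_left hlo, min_eq_right hhi]

theorem Finset.zero_le_sup'_abs {ι : Type*} {s : Finset ι} (H : s.Nonempty) (f : ι → ℝ) :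
    0 ≤ s.sup' H fun i => |f i| := by
  obtain ⟨i, hi⟩ := H
  exact (abs_nonneg _).trans (s.le_sup' (fun i => |f i|) hi)

theorem clip_at_ratio_eq_self {κ d₀ x : ℝ} (hκ : 0 < κ) (hd₀κ : d₀ ≤ κ)
    (hx : 1 ≤ x) (hxd₀ : x ≤ d₀) :
    min (κ * (d₀ / κ)) (max x (max 1 (d₀ / κ))) = x := by
  rw [mul_div_cancel₀ _ hκ.ne', max_eq_left ((div_le_one hκ).mpr hd₀κ)]
  exact min_max_eq_self_of_le hx hxd₀

theorem G2_min_zero_error_general (N : ℕ) (hN : 0 < N) (d : ℕ → ℝ) (κ : ℝ)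
    (hdec : ∀ i j, i ≤ j → j < N → d j ≤ d i)
    (hd1κ : d 0 ≤ κ) (hdN : 1 < d (N - 1))
    (G : ℝ → ℝ)
    (hG : ∀ u, G u = (Finset.range N).sup'
      (Finset.nonempty_range_iff.mpr hN.ne')
      (fun i => |min (κ * u) (max (d i) (max 1 u)) - d i|)) :
    G (d 0 / κ) = 0 ∧ ∀ u ∈ Set.Ici (1 / κ), G (d 0 / κ) ≤ G u := by
  have hlast : N - 1 < N := Nat.sub_lt hN one_pos
  have hbounds : ∀ i < N, 1 ≤ d i ∧ d i ≤ d 0 := fun i hi =>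
    ⟨(hdN.trans_le (hdec i (N - 1) (Nat.le_sub_one_of_lt hi) hlast)).le,
      hdec 0 i i.zero_le hi⟩
  have hκ : 0 < κ := one_pos.trans_le ((hbounds 0 hN).1.trans hd1κ)
  have hzero : G (d 0 / κ) = 0 := by
    rw [hG]
    refine (Finset.sup'_congr _ rfl fun i hi => ?_).trans (Finset.sup'_const _ 0)
    obtain ⟨hi1, hid₀⟩ := hbounds i (Finset.mem_range.mp hi)
    rw [clip_at_ratio_eq_self hκ hd1κ hi1 hid₀, sub_self, abs_zero]
  refine ⟨hzero, fun u _ => ?_⟩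
  rw [hzero, hG]
  exact Finset.zero_le_sup'_abs _ _

/-- Spectral-norm reduced problem, case `1 < d₁ ≤ κ` and `d_N > 1`: the value
`u* = d₁/κ` gives `G₂(u*) = 0` and minimizes `G₂` over `[1/κ, ∞)`. -/
theorem G2_min_zero_error (N : ℕ) (hN : 0 < N) (d : ℕ → ℝ) (κ : ℝ)
    (hdec : ∀ i j, i ≤ j → j < N → d j ≤ d i)
    (hd1 : 1 < d 0) (hd1κ : d 0 ≤ κ) (hdN : 1 < d (N - 1))
    (G : ℝ → ℝ)
    (hG : ∀ u, G u = (Finset.range N).sup'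
      (Finset.nonempty_range_iff.mpr hN.ne')
      (fun i => |min (κ * u) (max (d i) (max 1 u)) - d i|)) :
    G (d 0 / κ) = 0 ∧ ∀ u ∈ Set.Ici (1 / κ), G (d 0 / κ) ≤ G u :=
  G2_min_zero_error_general N hN d κ hdec hd1κ hdN G hG
end

section
/- Let S be an N×N Hermitian positive semidefinite matrix with spectral decomposition S = U Λ_S U†, Λ_S = diag(d₁,…,d_N) with d₁ ≥ … ≥ d_N. Let ‖·‖ be a unitarily invariant norm and κ ≥ 1. If Λ* = diag(λ₁*,…,λ_N*) minimizes ‖Λ - Λ_S‖ over diagonal matrices with λ_i ≥ 1 and max λ / min λ ≤ κ, then X* = U Λ* U† minimizes ‖X - S‖ over Hermitian X with X ⪰ I and λ_max(X)/λ_min(X) ≤ κ. -/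
/-!
Let `X - S = W diag(e) W†` with `e` sorted increasingly, and put `μ := d + e`. Since `d` is
sorted decreasingly, Weyl's inequalities for `X = S + (X - S)` give, for every `i`, nonzero
vectors whose Rayleigh quotients under `X` lie below and above `μ i`. Hence every `μ i` lies
between the extreme eigenvalues of `X`, so `μ` inherits `μ ≥ 1` and the condition-number bound
from `X`, i.e. it is feasible for the diagonal problem. By unitary invariance
`‖diag μ - Λ_S‖ = ‖diag e‖ = ‖X - S‖` and `‖U Λ* U† - S‖ = ‖Λ* - Λ_S‖`, and minimality of `Λ*`
concludes.
-/

open Matrix ComplexOrder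

section NormSqSums

variable {ι : Type*} [Fintype ι] {f : ι → ℝ} {w : ι → ℂ} {M : ℝ}

theorem exists_le_of_sum_mul_normSq_le (hw : w ≠ 0)
    (h : ∑ i, f i * Complex.normSq (w i) ≤ M * ∑ i, Complex.normSq (w i)) : ∃ i, f i ≤ M := by
  by_contra! hf
  obtain ⟨j, hj⟩ := Function.ne_iff.mp hw
  have : M * ∑ i, Complex.normSq (w i) < ∑ i, f i * Complex.normSq (w i) := by
    rw [Finset.mul_sum]
    refine Finset.sum_lt_sum (fun i _ => mul_le_mul_of_nonneg_right (hf i).le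
      (Complex.normSq_nonneg _)) ⟨j, Finset.mem_univ _, ?_⟩
    exact mul_lt_mul_of_pos_right (hf j) (Complex.normSq_pos.mpr hj)
  linarith

theorem exists_ge_of_le_sum_mul_normSq (hw : w ≠ 0)
    (h : M * ∑ i, Complex.normSq (w i) ≤ ∑ i, f i * Complex.normSq (w i)) : ∃ i, M ≤ f i := by
  obtain ⟨i, hi⟩ := exists_le_of_sum_mul_normSq_le (f := -f) (M := -M) hw
    (by simpa only [Pi.neg_apply, neg_mul, Finset.sum_neg_distrib, neg_le_neg_iff] using h)
  exact ⟨i, neg_le_neg_iff.mp hi⟩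

theorem sum_mul_normSq_le_of_forall_notMem {T : Finset ι} (hw : ∀ t ∉ T, w t = 0)
    (hf : ∀ t ∈ T, f t ≤ M) : ∑ i, f i * Complex.normSq (w i) ≤ M * ∑ i, Complex.normSq (w i) := by
  rw [Finset.mul_sum]
  refine Finset.sum_le_sum fun t _ => ?_
  by_cases ht : t ∈ T
  · exact mul_le_mul_of_nonneg_right (hf t ht) (Complex.normSq_nonneg _)
  · simp [hw t ht]

end NormSqSums

namespace Matrix

section QuadRe

variable {n : Type*} [Fintype n]

noncomputable def quadRe (A : Matrix n n ℂ) (v : n → ℂ) : ℝ := (star v ⬝ᵥ (A *ᵥ v)).re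

theorem quadRe_add (A B : Matrix n n ℂ) (v : n → ℂ) :
    quadRe (A + B) v = quadRe A v + quadRe B v := by
  simp only [quadRe, add_mulVec, dotProduct_add, Complex.add_re]

theorem quadRe_neg (A : Matrix n n ℂ) (v : n → ℂ) : quadRe (-A) v = -quadRe A v := by
  simp only [quadRe, neg_mulVec, dotProduct_neg, Complex.neg_re]

theorem quadRe_sub (A B : Matrix n n ℂ) (v : n → ℂ) :
    quadRe (A - B) v = quadRe A v - quadRe B v := by
  simp only [quadRe, sub_mulVec, dotProduct_sub, Complex.sub_re]

theorem quadRe_mul_mul_star (V M : Matrix n n ℂ) (v : n → ℂ) :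
    quadRe (V * M * star V) v = quadRe M (star V *ᵥ v) := by
  rw [quadRe, quadRe, star_mulVec, star_eq_conjTranspose, conjTranspose_conjTranspose,
    ← mulVec_mulVec, ← mulVec_mulVec, dotProduct_mulVec, dotProduct_mulVec, vecMul_vecMul]

theorem PosSemidef.quadRe_le {A B : Matrix n n ℂ} (h : (A - B).PosSemidef) (v : n → ℂ) :
    quadRe B v ≤ quadRe A v := by
  have := (Complex.le_def.mp (h.dotProduct_mulVec_nonneg v)).1
  rw [← quadRe, quadRe_sub] at this
  simpa using this

variable [DecidableEq n]

theorem quadRe_diagonal (d : n → ℝ) (w : n → ℂ) :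
    quadRe (diagonal fun i => (d i : ℂ)) w = ∑ i, d i * Complex.normSq (w i) := by
  simp only [quadRe, mulVec_diagonal, dotProduct, Complex.re_sum, Pi.star_apply,
    Complex.star_def, Complex.mul_re, Complex.mul_im, Complex.conj_re, Complex.conj_im,
    Complex.ofReal_re, Complex.ofReal_im, Complex.normSq_apply]
  refine Finset.sum_congr rfl fun i _ => ?_
  ring

theorem quadRe_one (v : n → ℂ) : quadRe 1 v = ∑ i, Complex.normSq (v i) := by
  simpa using quadRe_diagonal (fun _ => 1) v

theorem quadRe_one_pos {v : n → ℂ} (hv : v ≠ 0) : 0 < quadRe 1 v := by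
  rw [quadRe_one]
  obtain ⟨i, hi⟩ := Function.ne_iff.mp hv
  exact Finset.sum_pos' (fun j _ => Complex.normSq_nonneg _)
    ⟨i, Finset.mem_univ _, Complex.normSq_pos.mpr hi⟩

theorem quadRe_unitary_conj_diagonal (V : unitaryGroup n ℂ) (d : n → ℝ) (v : n → ℂ) :
    quadRe ((V : Matrix n n ℂ) * diagonal (fun i => (d i : ℂ)) * star (V : Matrix n n ℂ)) v =
      ∑ i, d i * Complex.normSq ((star (V : Matrix n n ℂ) *ᵥ v) i) := by
  rw [quadRe_mul_mul_star, quadRe_diagonal]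

theorem sum_normSq_unitary_mulVec (V : unitaryGroup n ℂ) (v : n → ℂ) :
    ∑ i, Complex.normSq ((star (V : Matrix n n ℂ) *ᵥ v) i) = ∑ i, Complex.normSq (v i) := by
  have h := quadRe_unitary_conj_diagonal V (fun _ => 1) v
  simp only [Complex.ofReal_one, diagonal_one, mul_one, one_mul,
    Unitary.mul_star_self_of_mem V.2] at h
  rw [← h, quadRe_one]

theorem star_unitary_mulVec_ne_zero (V : unitaryGroup n ℂ) {v : n → ℂ} (hv : v ≠ 0) :
    star (V : Matrix n n ℂ) *ᵥ v ≠ 0 := fun h => hv <| by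
  rw [← one_mulVec v, ← Unitary.mul_star_self_of_mem V.2, ← mulVec_mulVec, h, mulVec_zero]

theorem quadRe_unitary_conj_diagonal_le {V : unitaryGroup n ℂ} {a : n → ℝ} {v : n → ℂ}
    {T : Finset n} {α : ℝ} (hv : ∀ t ∉ T, (star (V : Matrix n n ℂ) *ᵥ v) t = 0)
    (ha : ∀ t ∈ T, a t ≤ α) :
    quadRe ((V : Matrix n n ℂ) * diagonal (fun i => (a i : ℂ)) * star (V : Matrix n n ℂ)) v ≤
      α * quadRe 1 v := by
  rw [quadRe_unitary_conj_diagonal, quadRe_one, ← sum_normSq_unitary_mulVec V]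
  exact sum_mul_normSq_le_of_forall_notMem hv ha

theorem neg_mul_diagonal_mul (V V' : Matrix n n ℂ) (a : n → ℝ) :
    -(V * diagonal (fun i => (a i : ℂ)) * V') = V * diagonal (fun i => ((-a i : ℝ) : ℂ)) * V' := by
  rw [← Matrix.neg_mul, ← Matrix.mul_neg, diagonal_neg]
  push_cast
  rfl

end QuadRe

namespace IsHermitian

variable {n : Type*} [Fintype n] [DecidableEq n] {A : Matrix n n ℂ}

theorem quadRe_eq_sum (hA : A.IsHermitian) (v : n → ℂ) :
    quadRe A v = ∑ i, hA.eigenvalues i *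
      Complex.normSq ((star (hA.eigenvectorUnitary : Matrix n n ℂ) *ᵥ v) i) := by
  conv_lhs => rw [hA.spectral_theorem, Unitary.conjStarAlgAut_apply]
  exact quadRe_unitary_conj_diagonal _ _ v

theorem exists_eigenvalues_le_of_quadRe_le (hA : A.IsHermitian) {v : n → ℂ} (hv : v ≠ 0)
    {M : ℝ} (h : quadRe A v ≤ M * quadRe 1 v) : ∃ i, hA.eigenvalues i ≤ M := by
  rw [hA.quadRe_eq_sum, quadRe_one, ← sum_normSq_unitary_mulVec hA.eigenvectorUnitary] at h
  exact exists_le_of_sum_mul_normSq_le (star_unitary_mulVec_ne_zero _ hv) h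

theorem exists_le_eigenvalues_of_le_quadRe (hA : A.IsHermitian) {v : n → ℂ} (hv : v ≠ 0)
    {M : ℝ} (h : M * quadRe 1 v ≤ quadRe A v) : ∃ i, M ≤ hA.eigenvalues i := by
  rw [hA.quadRe_eq_sum, quadRe_one, ← sum_normSq_unitary_mulVec hA.eigenvectorUnitary] at h
  exact exists_ge_of_le_sum_mul_normSq (star_unitary_mulVec_ne_zero _ hv) h

theorem le_mul_of_le_quadRe_of_quadRe_le (hA : A.IsHermitian) {κ : ℝ} (hκ : 0 ≤ κ)
    (hcond : ∀ i j, hA.eigenvalues i ≤ κ * hA.eigenvalues j) {v w : n → ℂ} (hv : v ≠ 0)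
    (hw : w ≠ 0) {m m' : ℝ} (hmv : m * quadRe 1 v ≤ quadRe A v)
    (hmw : quadRe A w ≤ m' * quadRe 1 w) : m ≤ κ * m' := by
  obtain ⟨p, hp⟩ := hA.exists_le_eigenvalues_of_le_quadRe hv hmv
  obtain ⟨q, hq⟩ := hA.exists_eigenvalues_le_of_quadRe_le hw hmw
  calc m ≤ hA.eigenvalues p := hp
    _ ≤ κ * hA.eigenvalues q := hcond p q
    _ ≤ κ * m' := mul_le_mul_of_nonneg_left hq hκ

end IsHermitian

theorem PosSemidef.one_le_of_quadRe_le {n : Type*} [Fintype n] [DecidableEq n]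
    {A : Matrix n n ℂ} (hA : (A - 1).PosSemidef) {v : n → ℂ} (hv : v ≠ 0) {m : ℝ}
    (h : quadRe A v ≤ m * quadRe 1 v) : 1 ≤ m :=
  le_of_mul_le_mul_right (by linarith [hA.quadRe_le v]) (quadRe_one_pos hv)

section Weyl

variable {n : Type*} [Fintype n] [DecidableEq n]

open Finset in
theorem exists_ne_zero_forall_notMem_mulVec_eq_zero {K : Type*} [Field K] (P Q : Matrix n n K)
    {T T' : Finset n} (h : Fintype.card n < #T + #T') :
    ∃ v ≠ 0, (∀ t ∉ T, (P *ᵥ v) t = 0) ∧ ∀ t ∉ T', (Q *ᵥ v) t = 0 := by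
  let F := (LinearMap.funLeft K K (Subtype.val : ↥(Tᶜ) → n) ∘ₗ P.mulVecLin).prod
    (LinearMap.funLeft K K (Subtype.val : ↥(T'ᶜ) → n) ∘ₗ Q.mulVecLin)
  have hker : LinearMap.ker F ≠ ⊥ := LinearMap.ker_ne_bot_of_finrank_lt <| by
    simp only [Module.finrank_prod, Module.finrank_fintype_fun_eq_card, Fintype.card_coe,
      card_compl]
    have := T.card_le_univ
    have := T'.card_le_univ
    omega
  obtain ⟨v, hv, hv0⟩ := (Submodule.ne_bot_iff _).mp hker
  refine ⟨v, hv0, fun t ht => ?_, fun t ht => ?_⟩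
  · exact congrFun (congrArg Prod.fst hv) ⟨t, mem_compl.mpr ht⟩
  · exact congrFun (congrArg Prod.snd hv) ⟨t, mem_compl.mpr ht⟩

open Finset in
theorem exists_ne_zero_quadRe_add_le {A B : Matrix n n ℂ} {V W : unitaryGroup n ℂ}
    {a b : n → ℝ}
    (hA : A = (V : Matrix n n ℂ) * diagonal (fun i => (a i : ℂ)) * star (V : Matrix n n ℂ))
    (hB : B = (W : Matrix n n ℂ) * diagonal (fun i => (b i : ℂ)) * star (W : Matrix n n ℂ))
    {T T' : Finset n} (hcard : Fintype.card n < #T + #T') {α β : ℝ}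
    (ha : ∀ t ∈ T, a t ≤ α) (hb : ∀ t ∈ T', b t ≤ β) :
    ∃ v ≠ 0, quadRe (A + B) v ≤ (α + β) * quadRe 1 v := by
  obtain ⟨v, hv, hvT, hvT'⟩ := exists_ne_zero_forall_notMem_mulVec_eq_zero
    (star (V : Matrix n n ℂ)) (star (W : Matrix n n ℂ)) hcard
  refine ⟨v, hv, ?_⟩
  rw [quadRe_add, add_mul, hA, hB]
  exact add_le_add (quadRe_unitary_conj_diagonal_le hvT ha)
    (quadRe_unitary_conj_diagonal_le hvT' hb)

end Weyl

section Sorted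

variable {N : ℕ} {A B : Matrix (Fin N) (Fin N) ℂ} {V W : unitaryGroup (Fin N) ℂ}
  {a b : Fin N → ℝ}

open Finset in
theorem exists_ne_zero_quadRe_add_le_of_antitone_of_monotone
    (hA : A = (V : Matrix (Fin N) (Fin N) ℂ) * diagonal (fun i => (a i : ℂ)) *
      star (V : Matrix (Fin N) (Fin N) ℂ))
    (hB : B = (W : Matrix (Fin N) (Fin N) ℂ) * diagonal (fun i => (b i : ℂ)) *
      star (W : Matrix (Fin N) (Fin N) ℂ))
    (ha : Antitone a) (hb : Monotone b) (i : Fin N) :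
    ∃ v ≠ 0, quadRe (A + B) v ≤ (a i + b i) * quadRe 1 v := by
  refine exists_ne_zero_quadRe_add_le hA hB (T := Ici i) (T' := Iic i) ?_
    (fun t ht => ha (mem_Ici.mp ht)) (fun t ht => hb (mem_Iic.mp ht))
  simp only [Fintype.card_fin, Fin.card_Ici, Fin.card_Iic]
  omega

theorem exists_ne_zero_le_quadRe_add_of_antitone_of_monotone
    (hA : A = (V : Matrix (Fin N) (Fin N) ℂ) * diagonal (fun i => (a i : ℂ)) *
      star (V : Matrix (Fin N) (Fin N) ℂ))
    (hB : B = (W : Matrix (Fin N) (Fin N) ℂ) * diagonal (fun i => (b i : ℂ)) *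
      star (W : Matrix (Fin N) (Fin N) ℂ))
    (ha : Antitone a) (hb : Monotone b) (i : Fin N) :
    ∃ v ≠ 0, (a i + b i) * quadRe 1 v ≤ quadRe (A + B) v := by
  obtain ⟨v, hv, h⟩ := exists_ne_zero_quadRe_add_le_of_antitone_of_monotone (A := -B) (B := -A)
    (by rw [hB, neg_mul_diagonal_mul]) (by rw [hA, neg_mul_diagonal_mul]) hb.neg ha.neg i
  refine ⟨v, hv, ?_⟩
  rw [← neg_add_rev, quadRe_neg] at h
  linarith

end Sorted

theorem submatrix_id_equiv_mem_unitaryGroup {n : Type*} [Fintype n] [DecidableEq n]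
    {V : Matrix n n ℂ} (hV : V ∈ unitaryGroup n ℂ) (σ : Equiv.Perm n) :
    V.submatrix id σ ∈ unitaryGroup n ℂ := by
  rw [mem_unitaryGroup_iff, star_eq_conjTranspose, conjTranspose_submatrix,
    ← submatrix_mul _ _ _ _ _ σ.bijective, ← star_eq_conjTranspose,
    Unitary.mul_star_self_of_mem hV, submatrix_id_id]

theorem IsHermitian.exists_unitary_monotone_diagonalization {N : ℕ}
    {A : Matrix (Fin N) (Fin N) ℂ} (hA : A.IsHermitian) :
    ∃ (W : unitaryGroup (Fin N) ℂ) (e : Fin N → ℝ), Monotone e ∧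
      A = (W : Matrix (Fin N) (Fin N) ℂ) * diagonal (fun i => (e i : ℂ)) *
        star (W : Matrix (Fin N) (Fin N) ℂ) := by
  set σ := Tuple.sort hA.eigenvalues
  set V : Matrix (Fin N) (Fin N) ℂ := (hA.eigenvectorUnitary : Matrix (Fin N) (Fin N) ℂ)
  refine ⟨⟨_, submatrix_id_equiv_mem_unitaryGroup hA.eigenvectorUnitary.2 σ⟩,
    hA.eigenvalues ∘ σ, Tuple.monotone_sort _, ?_⟩
  change A = V.submatrix id σ * diagonal ((fun i => ((hA.eigenvalues i : ℝ) : ℂ)) ∘ σ) *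
    star (V.submatrix id σ)
  rw [star_eq_conjTranspose, conjTranspose_submatrix, ← star_eq_conjTranspose,
    ← submatrix_diagonal_equiv, ← submatrix_mul _ _ _ _ _ σ.bijective,
    ← submatrix_mul _ _ _ _ _ σ.bijective, submatrix_id_id]
  conv_lhs => rw [hA.spectral_theorem, Unitary.conjStarAlgAut_apply]
  rfl

end Matrix

theorem shrinkage_structure_general (N : ℕ) (κ : ℝ) (hκ : 1 ≤ κ)
    (nrm : Matrix (Fin N) (Fin N) ℂ → ℝ)
    (hUI : ∀ (A : Matrix (Fin N) (Fin N) ℂ)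
      (V W : Matrix.unitaryGroup (Fin N) ℂ),
      nrm ((V : Matrix (Fin N) (Fin N) ℂ) * A * (W : Matrix (Fin N) (Fin N) ℂ))
        = nrm A)
    (S : Matrix (Fin N) (Fin N) ℂ) (hS : S.IsHermitian)
    (U : Matrix.unitaryGroup (Fin N) ℂ) (dvec : Fin N → ℝ)
    (hdord : ∀ i j : Fin N, i ≤ j → dvec j ≤ dvec i)
    (hdecomp : S = (U : Matrix (Fin N) (Fin N) ℂ) *
      Matrix.diagonal (fun i => (dvec i : ℂ)) *
      star (U : Matrix (Fin N) (Fin N) ℂ))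
    (lam : Fin N → ℝ)
    (hlam_min : ∀ μ : Fin N → ℝ, (∀ i, 1 ≤ μ i) → (∀ i j, μ i ≤ κ * μ j) →
      nrm (Matrix.diagonal (fun i => (lam i : ℂ)) -
            Matrix.diagonal (fun i => (dvec i : ℂ))) ≤
        nrm (Matrix.diagonal (fun i => (μ i : ℂ)) -
            Matrix.diagonal (fun i => (dvec i : ℂ)))) :
    ∀ (X : Matrix (Fin N) (Fin N) ℂ) (hX : X.IsHermitian),
      (X - 1).PosSemidef →
      (∀ i j, hX.eigenvalues i ≤ κ * hX.eigenvalues j) →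
      nrm ((U : Matrix (Fin N) (Fin N) ℂ) *
            Matrix.diagonal (fun i => (lam i : ℂ)) *
            star (U : Matrix (Fin N) (Fin N) ℂ) - S) ≤ nrm (X - S) := by
  intro X hX hX1 hXcond
  obtain ⟨W, e, he, hXS⟩ := (hX.sub hS).exists_unitary_monotone_diagonalization
  set μ : Fin N → ℝ := fun i => dvec i + e i
  have hX_eq : S + (X - S) = X := add_sub_cancel S X
  have hupper (i : Fin N) : ∃ v ≠ 0, quadRe X v ≤ μ i * quadRe 1 v :=
    hX_eq ▸ exists_ne_zero_quadRe_add_le_of_antitone_of_monotone hdecomp hXS hdord he i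
  have hlower (i : Fin N) : ∃ v ≠ 0, μ i * quadRe 1 v ≤ quadRe X v :=
    hX_eq ▸ exists_ne_zero_le_quadRe_add_of_antitone_of_monotone hdecomp hXS hdord he i
  have hμ_ge (i : Fin N) : 1 ≤ μ i := by
    obtain ⟨v, hv, hμv⟩ := hupper i
    exact hX1.one_le_of_quadRe_le hv hμv
  have hμ_cond (i j : Fin N) : μ i ≤ κ * μ j := by
    obtain ⟨v, hv, hμv⟩ := hlower i
    obtain ⟨w, hw, hμw⟩ := hupper j
    exact hX.le_mul_of_le_quadRe_of_quadRe_le (by linarith) hXcond hv hw hμv hμw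
  have hμ_sub : diagonal (fun i => (μ i : ℂ)) - diagonal (fun i => (dvec i : ℂ)) =
      diagonal (fun i => (e i : ℂ)) := by
    rw [diagonal_sub]
    simp [μ]
  calc nrm ((U : Matrix (Fin N) (Fin N) ℂ) * diagonal (fun i => (lam i : ℂ)) *
          star (U : Matrix (Fin N) (Fin N) ℂ) - S)
      = nrm (diagonal (fun i => (lam i : ℂ)) - diagonal (fun i => (dvec i : ℂ))) := by
        rw [hdecomp, ← Matrix.sub_mul, ← Matrix.mul_sub]
        exact hUI _ U (star U)
    _ ≤ nrm (diagonal (fun i => (μ i : ℂ)) - diagonal (fun i => (dvec i : ℂ))) :=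
        hlam_min μ hμ_ge hμ_cond
    _ = nrm (X - S) := by
        rw [hμ_sub, hXS]
        exact (hUI _ W (star W)).symm

/-- Shrinkage structure of the projection estimator (Lemma 1): if the diagonal
matrix `Λ*` minimizes `‖Λ - Λ_S‖` over diagonal matrices with entries `≥ 1` and
condition number `≤ κ`, then `X* = U Λ* U†` minimizes `‖X - S‖` over Hermitian
`X ⪰ I` with condition number `≤ κ`, for any unitarily invariant norm. -/
theorem shrinkage_structure (N : ℕ) (hN : 0 < N) (κ : ℝ) (hκ : 1 ≤ κ)
    (nrm : Matrix (Fin N) (Fin N) ℂ → ℝ)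
    (hUI : ∀ (A : Matrix (Fin N) (Fin N) ℂ)
      (V W : Matrix.unitaryGroup (Fin N) ℂ),
      nrm ((V : Matrix (Fin N) (Fin N) ℂ) * A * (W : Matrix (Fin N) (Fin N) ℂ))
        = nrm A)
    (S : Matrix (Fin N) (Fin N) ℂ) (hS : S.IsHermitian) (hSpsd : S.PosSemidef)
    (U : Matrix.unitaryGroup (Fin N) ℂ) (dvec : Fin N → ℝ)
    (hdord : ∀ i j : Fin N, i ≤ j → dvec j ≤ dvec i)
    (hdecomp : S = (U : Matrix (Fin N) (Fin N) ℂ) *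
      Matrix.diagonal (fun i => (dvec i : ℂ)) *
      star (U : Matrix (Fin N) (Fin N) ℂ))
    (lam : Fin N → ℝ)
    (hlam_ge : ∀ i, 1 ≤ lam i)
    (hlam_cond : ∀ i j, lam i ≤ κ * lam j)
    (hlam_min : ∀ μ : Fin N → ℝ, (∀ i, 1 ≤ μ i) → (∀ i j, μ i ≤ κ * μ j) →
      nrm (Matrix.diagonal (fun i => (lam i : ℂ)) -
            Matrix.diagonal (fun i => (dvec i : ℂ))) ≤
        nrm (Matrix.diagonal (fun i => (μ i : ℂ)) -
            Matrix.diagonal (fun i => (dvec i : ℂ)))) :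
    ∀ (X : Matrix (Fin N) (Fin N) ℂ) (hX : X.IsHermitian),
      (X - 1).PosSemidef →
      (∀ i j, hX.eigenvalues i ≤ κ * hX.eigenvalues j) →
      nrm ((U : Matrix (Fin N) (Fin N) ℂ) *
            Matrix.diagonal (fun i => (lam i : ℂ)) *
            star (U : Matrix (Fin N) (Fin N) ℂ) - S) ≤ nrm (X - S) :=
  shrinkage_structure_general N κ hκ nrm hUI S hS U dvec hdord hdecomp lam hlam_min
end

section
/- Let g : ℝ^N → ℝ be a monotone norm (i.e., |x_i| ≤ |y_i| for all i implies g(x) ≤ g(y)), and let d ∈ ℝ^N, κ ≥ 1, u ≥ 1/κ be fixed. Then λ*(u) with λ_i*(u) = min(κu, max(d_i, max(1, u))) minimizes g(|λ₁ - d₁|, …, |λ_N - d_N|) over vectors λ satisfying λ_i ≥ 1 and u ≤ λ_i ≤ κu for all i. -/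
/-!
Both constraints confine each coordinate `λᵢ` to the same interval `[max 1 u, κu]`, which is
nonempty because `u ≥ 1/κ` and `κ ≥ 1`. Clamping `dᵢ` into that interval minimises every
`|λᵢ - dᵢ|` separately, and a monotone `g` turns these coordinatewise bounds into the bound on
`g`.
-/

theorem abs_min_max_sub_le {α : Type*} [AddCommGroup α] [LinearOrder α] [IsOrderedAddMonoid α]
    {L U d μ : α} (hLμ : L ≤ μ) (hμU : μ ≤ U) :
    |min U (max d L) - d| ≤ |μ - d| := by
  rcases le_total d L with hdL | hLd
  · rw [max_eq_right hdL, min_eq_right (hLμ.trans hμU), abs_of_nonneg (sub_nonneg.2 hdL)]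
    exact (sub_le_sub_right hLμ d).trans (le_abs_self _)
  · rw [max_eq_left hLd]
    rcases le_total U d with hUd | hdU
    · rw [min_eq_left hUd, abs_of_nonpos (sub_nonpos.2 hUd), neg_sub, abs_sub_comm]
      exact (sub_le_sub_left hμU d).trans (le_abs_self _)
    · simp [min_eq_right hdU]

/-- Lemma 2: for fixed `u`, the vector `λ*(u)` with
`λᵢ*(u) = min (κu) (max dᵢ (max 1 u))` minimizes the monotone norm
`g(|λ₁ - d₁|, …, |λ_N - d_N|)` over the decoupled constraint set. -/
theorem decoupled_minimizer (N : ℕ) (g : (Fin N → ℝ) → ℝ)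
    (hg_mono : ∀ x y : Fin N → ℝ, (∀ i, |x i| ≤ |y i|) → g x ≤ g y)
    (d : Fin N → ℝ) (κ u : ℝ) (hκ : 1 ≤ κ) (hu : 1 / κ ≤ u) :
    (∀ i, 1 ≤ min (κ * u) (max (d i) (max 1 u)) ∧
      u ≤ min (κ * u) (max (d i) (max 1 u)) ∧
      min (κ * u) (max (d i) (max 1 u)) ≤ κ * u) ∧
    ∀ μ : Fin N → ℝ, (∀ i, 1 ≤ μ i) → (∀ i, u ≤ μ i ∧ μ i ≤ κ * u) →
      g (fun i => |min (κ * u) (max (d i) (max 1 u)) - d i|) ≤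
        g (fun i => |μ i - d i|) := by
  have hκu : 1 ≤ κ * u := by rwa [div_le_iff₀' (by positivity)] at hu
  have hu_le : u ≤ κ * u := le_mul_of_one_le_left ((by positivity : (0 : ℝ) ≤ 1 / κ).trans hu) hκ
  refine ⟨fun i => ⟨?_, ?_, min_le_left _ _⟩, fun μ hμ₁ hμu => hg_mono _ _ fun i => ?_⟩
  · exact le_min hκu (le_max_of_le_right (le_max_left _ _))
  · exact le_min hu_le (le_max_of_le_right (le_max_right _ _))
  · rw [abs_abs, abs_abs]
    exact abs_min_max_sub_le (max_le (hμ₁ i) (hμu i).1) (hμu i).2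
end

section
/- Fix κ ≥ 1. The map (X : Hermitian positive definite N×N matrices with X ⪰ I) ↦ λ_max(X)/λ_min(X) is quasiconvex on the convex set {X ⪰ I}; in particular, the set {X : X ⪰ I, λ_max(X) ≤ κ λ_min(X)} is convex. -/
/-!
In the Loewner order, `r • 1 ≤ A` says that every eigenvalue of `A` is at least `r`, and
`A ≤ r • 1` that every eigenvalue is at most `r`. Since these order relations are preserved by
nonnegative combinations, `λ_min` is concave and `λ_max` convex on Hermitian matrices. Hence
`λ_max ≤ c λ_min` with `c ≥ 0` cuts out a convex set, and on `{X ⪰ I}`, where `λ_min ≥ 1 > 0`,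
these sets are exactly the sublevel sets of `λ_max / λ_min`.
-/

open Matrix ComplexOrder

open scoped MatrixOrder

namespace Matrix.IsHermitian

variable {𝕜 n : Type*} [RCLike 𝕜] [Fintype n] [DecidableEq n] [Nonempty n] {A X Y : Matrix n n 𝕜}

lemma algebraMap_le_iff_le_iInf_eigenvalues (hA : A.IsHermitian) (r : ℝ) :
    algebraMap ℝ _ r ≤ A ↔ r ≤ ⨅ i, hA.eigenvalues i := by
  rw [algebraMap_le_iff_le_spectrum hA.isSelfAdjoint, hA.spectrum_real_eq_range_eigenvalues,
    le_ciInf_iff (Finite.bddBelow_range _), Set.forall_mem_range]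

lemma le_algebraMap_iff_iSup_eigenvalues_le (hA : A.IsHermitian) (r : ℝ) :
    A ≤ algebraMap ℝ _ r ↔ (⨆ i, hA.eigenvalues i) ≤ r := by
  rw [le_algebraMap_iff_spectrum_le hA.isSelfAdjoint, hA.spectrum_real_eq_range_eigenvalues,
    ciSup_le_iff (Finite.bddAbove_range _), Set.forall_mem_range]

lemma one_le_iInf_eigenvalues (hA : A.IsHermitian) (h : 1 ≤ A) : 1 ≤ ⨅ i, hA.eigenvalues i :=
  (hA.algebraMap_le_iff_le_iInf_eigenvalues 1).1 (by rwa [map_one])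

lemma le_iInf_eigenvalues_smul_add_smul {a b : ℝ} (ha : 0 ≤ a) (hb : 0 ≤ b)
    (hX : X.IsHermitian) (hY : Y.IsHermitian) (hZ : (a • X + b • Y).IsHermitian) :
    a * (⨅ i, hX.eigenvalues i) + b * (⨅ i, hY.eigenvalues i) ≤ ⨅ i, hZ.eigenvalues i := by
  rw [← hZ.algebraMap_le_iff_le_iInf_eigenvalues, map_add, map_mul, map_mul,
    ← Algebra.smul_def, ← Algebra.smul_def]
  exact add_le_add
    (smul_le_smul_of_nonneg_left ((hX.algebraMap_le_iff_le_iInf_eigenvalues _).2 le_rfl) ha)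
    (smul_le_smul_of_nonneg_left ((hY.algebraMap_le_iff_le_iInf_eigenvalues _).2 le_rfl) hb)

lemma iSup_eigenvalues_smul_add_smul_le {a b : ℝ} (ha : 0 ≤ a) (hb : 0 ≤ b)
    (hX : X.IsHermitian) (hY : Y.IsHermitian) (hZ : (a • X + b • Y).IsHermitian) :
    (⨆ i, hZ.eigenvalues i) ≤ a * (⨆ i, hX.eigenvalues i) + b * (⨆ i, hY.eigenvalues i) := by
  rw [← hZ.le_algebraMap_iff_iSup_eigenvalues_le, map_add, map_mul, map_mul,
    ← Algebra.smul_def, ← Algebra.smul_def]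
  exact add_le_add
    (smul_le_smul_of_nonneg_left ((hX.le_algebraMap_iff_iSup_eigenvalues_le _).2 le_rfl) ha)
    (smul_le_smul_of_nonneg_left ((hY.le_algebraMap_iff_iSup_eigenvalues_le _).2 le_rfl) hb)

lemma iSup_eigenvalues_le_mul_iInf_eigenvalues_smul_add_smul {a b c : ℝ} (ha : 0 ≤ a)
    (hb : 0 ≤ b) (hc : 0 ≤ c) (hX : X.IsHermitian) (hY : Y.IsHermitian)
    (hZ : (a • X + b • Y).IsHermitian)
    (hXc : (⨆ i, hX.eigenvalues i) ≤ c * ⨅ i, hX.eigenvalues i)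
    (hYc : (⨆ i, hY.eigenvalues i) ≤ c * ⨅ i, hY.eigenvalues i) :
    (⨆ i, hZ.eigenvalues i) ≤ c * ⨅ i, hZ.eigenvalues i :=
  calc (⨆ i, hZ.eigenvalues i)
      ≤ a * (⨆ i, hX.eigenvalues i) + b * (⨆ i, hY.eigenvalues i) :=
        iSup_eigenvalues_smul_add_smul_le ha hb hX hY hZ
    _ ≤ a * (c * ⨅ i, hX.eigenvalues i) + b * (c * ⨅ i, hY.eigenvalues i) := by gcongr
    _ = c * (a * (⨅ i, hX.eigenvalues i) + b * (⨅ i, hY.eigenvalues i)) := by ring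
    _ ≤ c * ⨅ i, hZ.eigenvalues i := by
        gcongr
        exact le_iInf_eigenvalues_smul_add_smul ha hb hX hY hZ

lemma iSup_div_iInf_eigenvalues_smul_add_smul_le_max {a b : ℝ} (ha : 0 ≤ a) (hb : 0 ≤ b)
    (hX : X.IsHermitian) (hY : Y.IsHermitian) (hZ : (a • X + b • Y).IsHermitian)
    (hXpos : 0 < ⨅ i, hX.eigenvalues i) (hYpos : 0 < ⨅ i, hY.eigenvalues i) :
    (⨆ i, hZ.eigenvalues i) / (⨅ i, hZ.eigenvalues i) ≤
      max ((⨆ i, hX.eigenvalues i) / (⨅ i, hX.eigenvalues i))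
        ((⨆ i, hY.eigenvalues i) / (⨅ i, hY.eigenvalues i)) := by
  set c := max ((⨆ i, hX.eigenvalues i) / (⨅ i, hX.eigenvalues i))
    ((⨆ i, hY.eigenvalues i) / (⨅ i, hY.eigenvalues i))
  have hc : 0 ≤ c := (div_nonneg (hXpos.le.trans (ciInf_le_ciSup (Finite.bddBelow_range _)
    (Finite.bddAbove_range _))) hXpos.le).trans (le_max_left _ _)
  have hZnonneg : 0 ≤ ⨅ i, hZ.eigenvalues i :=
    (by positivity : 0 ≤ a * (⨅ i, hX.eigenvalues i) + b * (⨅ i, hY.eigenvalues i)).trans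
      (le_iInf_eigenvalues_smul_add_smul ha hb hX hY hZ)
  exact div_le_of_le_mul₀ hZnonneg hc <|
    iSup_eigenvalues_le_mul_iInf_eigenvalues_smul_add_smul ha hb hc hX hY hZ
      ((div_le_iff₀ hXpos).1 (le_max_left _ _)) ((div_le_iff₀ hYpos).1 (le_max_right _ _))

end Matrix.IsHermitian

/-- Quasiconvexity of the condition number `λ_max/λ_min` on the convex set
`{X Hermitian : X ⪰ I}`; in particular the feasible set of the projection
problem (condition number at most `κ`) is convex. -/
theorem condition_number_quasiconvex (N : ℕ) (hN : 0 < N) (κ : ℝ) (hκ : 1 ≤ κ) :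
    Convex ℝ {X : Matrix (Fin N) (Fin N) ℂ | X.IsHermitian ∧ (X - 1).PosSemidef} ∧
    QuasiconvexOn ℝ
      {X : Matrix (Fin N) (Fin N) ℂ | X.IsHermitian ∧ (X - 1).PosSemidef}
      (fun X =>
        if h : X.IsHermitian then (⨆ i, h.eigenvalues i) / (⨅ i, h.eigenvalues i)
        else 0) ∧
    Convex ℝ {X : Matrix (Fin N) (Fin N) ℂ |
      ∃ h : X.IsHermitian, (X - 1).PosSemidef ∧
        (⨆ i, h.eigenvalues i) ≤ κ * (⨅ i, h.eigenvalues i)} := by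
  have : Nonempty (Fin N) := Fin.pos_iff_nonempty.mp hN
  have hS : {X : Matrix (Fin N) (Fin N) ℂ | X.IsHermitian ∧ (X - 1).PosSemidef} = Set.Ici 1 :=
    Set.ext fun X =>
      ⟨And.right, fun h => ⟨sub_add_cancel X 1 ▸ h.isHermitian.add isHermitian_one, h⟩⟩
  have hSconv := hS ▸ convex_Ici (𝕜 := ℝ) (1 : Matrix (Fin N) (Fin N) ℂ)
  have hpos : ∀ {X : Matrix (Fin N) (Fin N) ℂ} (hX : X.IsHermitian), 1 ≤ X →
      0 < ⨅ i, hX.eigenvalues i :=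
    fun hX h => one_pos.trans_le (hX.one_le_iInf_eigenvalues h)
  refine ⟨hSconv, quasiconvexOn_iff_le_max.2 ⟨hSconv, ?_⟩, ?_⟩
  · rintro X ⟨hX, hX1⟩ Y ⟨hY, hY1⟩ a b ha hb hab
    obtain ⟨hZ, -⟩ := hSconv ⟨hX, hX1⟩ ⟨hY, hY1⟩ ha hb hab
    simp only [dif_pos hX, dif_pos hY, dif_pos hZ]
    exact IsHermitian.iSup_div_iInf_eigenvalues_smul_add_smul_le_max ha hb hX hY hZ
      (hpos hX hX1) (hpos hY hY1)
  · rintro X ⟨hX, hX1, hXκ⟩ Y ⟨hY, hY1, hYκ⟩ a b ha hb hab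
    obtain ⟨hZ, hZ1⟩ := hSconv ⟨hX, hX1⟩ ⟨hY, hY1⟩ ha hb hab
    exact ⟨hZ, hZ1, IsHermitian.iSup_eigenvalues_le_mul_iInf_eigenvalues_smul_add_smul ha hb
      (zero_le_one.trans hκ) hX hY hZ hXκ hYκ⟩
end
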